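/- arXiv:2605.07045 — 7 statements merged into one kernel-verified Lean document; each statement's English description precedes it below -/
import Mathlib

section
/- Let n ≥ 2, let v_1,…,v_n > 0 and c_1,…,c_n > 0, and let α > 0 be the unique solution of ∑_{i=1}^n [1 − (c_i/v_i)·α]^+ = 1. Then the bid profile x* defined by x_i* = α·[1 − (c_i/v_i)·α]^+ is a Nash equilibrium of the Tullock contest: for every player i and every x_i ≥ 0, U_i(x_i*, x_{−i}*) ≥ U_i(x_i, x_{−i}*). -/
/-!
Against opponents bidding `s > 0` in total, a bid `y` earns
`v y / (y + s) - c y = v + c s - (v s / z + c z)` with `z = y + s ≥ s`, and `z ↦ v s / z + c z`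
is convex with minimiser `√(v s / c)`. In `x*` the total bid is `α`, so `s = α - xᵢ*`. If `xᵢ* > 0`
then `v s = c α²`, so `z = α` is the unconstrained minimiser; if `xᵢ* = 0` then `v ≤ c α`, so the
minimiser lies below `s = α` and the boundary bid `0` is optimal.
-/

/-- Utility of player `i` in an `n`-player Tullock contest with valuations `v`
and per-unit costs `c`, given the bid profile `x` (with the convention `0/0 = 0`,
which is Lean's default for division). -/
noncomputable def tullockUtility {n : ℕ} (v c : Fin n → ℝ) (i : Fin n)
    (x : Fin n → ℝ) : ℝ :=
  v i * (x i / ∑ j, x j) - c i * x i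

section OrderedField

variable {𝕜 : Type*} [Field 𝕜] [LinearOrder 𝕜] [IsStrictOrderedRing 𝕜]

theorem div_add_mul_le_div_add_mul {a c w z : 𝕜} (hw : 0 < w) (hz : 0 < z) (hc : 0 ≤ c)
    (h : (z - w) * (a - c * w ^ 2) ≤ 0) : a / w + c * w ≤ a / z + c * z := by
  have key : a / z + c * z - (a / w + c * w)
      = (c * w * (z - w) ^ 2 - (z - w) * (a - c * w ^ 2)) / (w * z) := by
    field_simp
    ring
  have : 0 ≤ a / z + c * z - (a / w + c * w) := by
    rw [key]
    have := mul_nonneg (mul_nonneg hc hw.le) (sq_nonneg (z - w))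
    exact div_nonneg (by linarith) (mul_pos hw hz).le
  linarith

theorem tullock_payoff_le_of_mul_nonpos {v c x y z : 𝕜} (hx : 0 ≤ x) (hxz : x < z) (hy : 0 ≤ y)
    (hc : 0 ≤ c) (h : (y - x) * (v * (z - x) - c * z ^ 2) ≤ 0) :
    v * (y / (y + (z - x))) - c * y ≤ v * (x / z) - c * x := by
  have hz : 0 < z := hx.trans_lt hxz
  have hyz : 0 < y + (z - x) := by linarith
  have hcore := div_add_mul_le_div_add_mul (a := v * (z - x)) hz hyz hc
    (by rwa [show y + (z - x) - z = y - x by ring])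
  have h1 : v * (y / (y + (z - x))) = v - v * (z - x) / (y + (z - x)) := by field_simp; ring
  have h2 : v * (x / z) = v - v * (z - x) / z := by field_simp; ring
  rw [h1, h2]
  linarith

end OrderedField

theorem tullock_equilibrium_mul_nonpos {v c α y : ℝ} (hv : 0 < v) (hα : 0 < α) (hy : 0 ≤ y) :
    (y - α * max 0 (1 - c / v * α)) * (v * (α - α * max 0 (1 - c / v * α)) - c * α ^ 2) ≤ 0 := by
  have hfactor : v * (α - α * max 0 (1 - c / v * α)) - c * α ^ 2
      = α * v * (1 - c / v * α - max 0 (1 - c / v * α)) := by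
    field_simp
    ring
  rw [hfactor]
  rcases le_total (1 - c / v * α) 0 with h | h
  · rw [max_eq_left h, mul_zero, sub_zero, sub_zero]
    exact mul_nonpos_of_nonneg_of_nonpos hy (mul_nonpos_of_nonneg_of_nonpos (by positivity) h)
  · rw [max_eq_right h, sub_self, mul_zero, mul_zero]

theorem tullockUtility_update {n : ℕ} (v c : Fin n → ℝ) (i : Fin n) (x : Fin n → ℝ) (y : ℝ) :
    tullockUtility v c i (Function.update x i y) = v i * (y / (y + (∑ j, x j - x i))) - c i * y := by
  rw [tullockUtility, Finset.sum_update_of_mem (Finset.mem_univ i), Function.update_self,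
    Finset.sum_sdiff_eq_sub (Finset.subset_univ _), Finset.sum_singleton]

theorem tullock_nash_equilibrium_general (n : ℕ)
    (v c : Fin n → ℝ) (hv : ∀ i, 0 < v i) (hc : ∀ i, 0 < c i)
    (α : ℝ) (hα : 0 < α)
    (hαeq : ∑ i, max (0 : ℝ) (1 - c i / v i * α) = 1)
    (xstar : Fin n → ℝ)
    (hx : ∀ i, xstar i = α * max (0 : ℝ) (1 - c i / v i * α)) :
    ∀ i : Fin n, ∀ y : ℝ, 0 ≤ y →
      tullockUtility v c i (Function.update xstar i y) ≤
        tullockUtility v c i xstar := by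
  intro i y hy
  have htotal : ∑ j, xstar j = α := by
    simp_rw [hx, ← Finset.mul_sum, hαeq, mul_one]
  have hshare_lt_one : max (0 : ℝ) (1 - c i / v i * α) < 1 :=
    max_lt one_pos (sub_lt_self 1 (by have := hv i; have := hc i; positivity))
  rw [tullockUtility_update, tullockUtility, htotal, hx i]
  exact tullock_payoff_le_of_mul_nonpos (by positivity) (mul_lt_of_lt_one_right hα hshare_lt_one) hy
    (hc i).le (tullock_equilibrium_mul_nonpos (hv i) hα hy)

/-- For `n ≥ 2`, valuations `v i > 0`, costs `c i > 0`, and `α > 0` the unique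
solution of `∑ i, [1 - (c i / v i) * α]^+ = 1`, the profile
`x* i = α * [1 - (c i / v i) * α]^+` is a Nash equilibrium of the Tullock
contest: no player can profit by a unilateral deviation to any bid `y ≥ 0`. -/
theorem tullock_nash_equilibrium (n : ℕ) (hn : 2 ≤ n)
    (v c : Fin n → ℝ) (hv : ∀ i, 0 < v i) (hc : ∀ i, 0 < c i)
    (α : ℝ) (hα : 0 < α)
    (hαeq : ∑ i, max (0 : ℝ) (1 - c i / v i * α) = 1)
    (xstar : Fin n → ℝ)
    (hx : ∀ i, xstar i = α * max (0 : ℝ) (1 - c i / v i * α)) :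
    ∀ i : Fin n, ∀ y : ℝ, 0 ≤ y →
      tullockUtility v c i (Function.update xstar i y) ≤
        tullockUtility v c i xstar :=
  tullock_nash_equilibrium_general n v c hv hc α hα hαeq xstar hx
end

section
/- Let n ≥ 3, let v_1,…,v_n > 0 and c_1,…,c_n > 0 be indexed so that v_1/c_1 ≤ v_2/c_2 ≤ … ≤ v_n/c_n, and suppose for some index m with 2 ≤ m ≤ n−1 that (n−m)·(c_m/v_m) ≤ ∑_{k=m}^n c_k/v_k ≤ (n−m)·(c_{m−1}/v_{m−1}). Then the unique α > 0 with ∑_{i=1}^n [1 − (c_i/v_i)·α]^+ = 1 is α = (n−m)·(∑_{k=m}^n c_k/v_k)^{−1}, and for every i < m the equilibrium bid x_i* = α·[1 − (c_i/v_i)·α]^+ and equilibrium payoff [v_i − c_i·α]^+ are both zero. -/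
/-- For an `n`-player Tullock contest (`n ≥ 3`, players indexed `1,…,n`) with
valuations `v i > 0` and costs `c i > 0` sorted so that `v i / c i` is
nondecreasing, if an index `m` with `2 ≤ m ≤ n - 1` satisfies
`(n - m) * (c m / v m) ≤ ∑_{k=m}^n c k / v k ≤ (n - m) * (c (m-1) / v (m-1))`,
then the unique `α > 0` with `∑_{i=1}^n [1 - (c i / v i) * α]^+ = 1` is
`α = (n - m) * (∑_{k=m}^n c k / v k)⁻¹`, and for every `i < m` the equilibrium
bid `α * [1 - (c i / v i) * α]^+` and payoff `[v i - c i * α]^+` are zero. -/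
theorem tullock_alpha_dropouts (n : ℕ) (hn : 3 ≤ n) (v c : ℕ → ℝ)
    (hv : ∀ i ∈ Finset.Icc 1 n, 0 < v i)
    (hc : ∀ i ∈ Finset.Icc 1 n, 0 < c i)
    (hsorted : ∀ i ∈ Finset.Icc 1 (n - 1), v i / c i ≤ v (i + 1) / c (i + 1))
    (m : ℕ) (hm1 : 2 ≤ m) (hm2 : m ≤ n - 1)
    (hcond1 : ((n : ℝ) - m) * (c m / v m) ≤ ∑ k ∈ Finset.Icc m n, c k / v k)
    (hcond2 : ∑ k ∈ Finset.Icc m n, c k / v k ≤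
      ((n : ℝ) - m) * (c (m - 1) / v (m - 1)))
    (α : ℝ) (hαdef : α = ((n : ℝ) - m) * (∑ k ∈ Finset.Icc m n, c k / v k)⁻¹) :
    0 < α ∧
    (∑ i ∈ Finset.Icc 1 n, max (0 : ℝ) (1 - c i / v i * α) = 1) ∧
    (∀ β : ℝ, 0 < β →
      ∑ i ∈ Finset.Icc 1 n, max (0 : ℝ) (1 - c i / v i * β) = 1 → β = α) ∧
    (∀ i ∈ Finset.Icc 1 (m - 1),
      α * max (0 : ℝ) (1 - c i / v i * α) = 0 ∧
      max (0 : ℝ) (v i - c i * α) = 0) := by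
  have hmn : m < n := by omega
  have hm_le : m ≤ n := le_of_lt hmn
  have hr_pos : ∀ i ∈ Finset.Icc 1 n, 0 < c i / v i := fun i hi =>
    div_pos (hc i hi) (hv i hi)
  have hS_pos : 0 < ∑ k ∈ Finset.Icc m n, c k / v k := by
    apply Finset.sum_pos
    · intro k hk
      rw [Finset.mem_Icc] at hk
      exact hr_pos k (Finset.mem_Icc.mpr ⟨by omega, hk.2⟩)
    · exact ⟨m, Finset.mem_Icc.mpr ⟨le_refl m, hm_le⟩⟩
  have hnm_pos : (0:ℝ) < (n:ℝ) - m := by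
    have : (m:ℝ) < n := by exact_mod_cast hmn
    linarith
  have hα_pos : 0 < α := by rw [hαdef]; positivity
  -- monotonicity of ratios
  have haux : ∀ i j, 1 ≤ i → i ≤ j → j ≤ n → v i / c i ≤ v j / c j := by
    intro i j h1 hij
    induction j, hij using Nat.le_induction with
    | base => intro _; exact le_refl _
    | succ j hij ih =>
      intro hjn
      have h1j : j ≤ n := by omega
      refine le_trans (ih h1j) (hsorted j ?_)
      exact Finset.mem_Icc.mpr ⟨by omega, by omega⟩
  have hraux : ∀ i j, 1 ≤ i → i ≤ j → j ≤ n → c j / v j ≤ c i / v i := by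
    intro i j h1 hij hjn
    have hvi := hv i (Finset.mem_Icc.mpr ⟨h1, by omega⟩)
    have hci := hc i (Finset.mem_Icc.mpr ⟨h1, by omega⟩)
    have hvj := hv j (Finset.mem_Icc.mpr ⟨by omega, hjn⟩)
    have hcj := hc j (Finset.mem_Icc.mpr ⟨by omega, hjn⟩)
    have h := haux i j h1 hij hjn
    rw [div_le_div_iff₀ hci hcj] at h
    rw [div_le_div_iff₀ hvj hvi]
    nlinarith [h]
  set S := ∑ k ∈ Finset.Icc m n, c k / v k with hS
  have hSne : S ≠ 0 := ne_of_gt hS_pos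
  have hα1 : c m / v m * α ≤ 1 := by
    rw [hαdef, show c m / v m * (((n:ℝ) - m) * S⁻¹) = (((n:ℝ) - m) * (c m / v m)) / S by
      field_simp]
    exact (div_le_one hS_pos).mpr hcond1
  have hα2 : 1 ≤ c (m - 1) / v (m - 1) * α := by
    rw [hαdef, show c (m-1) / v (m-1) * (((n:ℝ) - m) * S⁻¹)
        = (((n:ℝ) - m) * (c (m-1) / v (m-1))) / S by field_simp]
    exact (one_le_div hS_pos).mpr hcond2
  -- terms for i ≥ m are nonnegative
  have hhi : ∀ i ∈ Finset.Icc m n, c i / v i * α ≤ 1 := by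
    intro i hi
    rw [Finset.mem_Icc] at hi
    refine le_trans ?_ hα1
    exact mul_le_mul_of_nonneg_right (hraux m i (by omega) hi.1 hi.2) hα_pos.le
  -- terms for i ≤ m-1 are nonpositive
  have hlo : ∀ i ∈ Finset.Icc 1 (m - 1), 1 ≤ c i / v i * α := by
    intro i hi
    rw [Finset.mem_Icc] at hi
    refine le_trans hα2 ?_
    exact mul_le_mul_of_nonneg_right (hraux i (m-1) hi.1 hi.2 (by omega)) hα_pos.le
  have hcard : (Finset.Icc m n).card = n + 1 - m := Nat.card_Icc m n
  have hsum : ∑ i ∈ Finset.Icc 1 n, max (0:ℝ) (1 - c i / v i * α) = 1 := by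
    have hIcc1 : Finset.Icc 1 n = Finset.Ioc 0 n := Finset.Icc_add_one_left_eq_Ioc 0 n
    have hIcc2 : Finset.Icc 1 (m-1) = Finset.Ioc 0 (m-1) := Finset.Icc_add_one_left_eq_Ioc 0 (m-1)
    have hIcc3 : Finset.Icc m n = Finset.Ioc (m-1) n := by
      rw [← Finset.Icc_add_one_left_eq_Ioc]
      congr 1
      omega
    rw [hIcc1, ← Finset.sum_Ioc_consecutive _ (Nat.zero_le (m-1)) (show m-1 ≤ n by omega),
      ← hIcc2, ← hIcc3]
    have h0 : ∑ i ∈ Finset.Icc 1 (m-1), max (0:ℝ) (1 - c i / v i * α) = 0 := by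
      apply Finset.sum_eq_zero
      intro i hi
      exact max_eq_left (by linarith [hlo i hi])
    rw [h0, zero_add]
    have h1 : ∑ i ∈ Finset.Icc m n, max (0:ℝ) (1 - c i / v i * α)
        = ∑ i ∈ Finset.Icc m n, (1 - c i / v i * α) := by
      apply Finset.sum_congr rfl
      intro i hi
      exact max_eq_right (by linarith [hhi i hi])
    rw [h1, Finset.sum_sub_distrib, Finset.sum_const, hcard, ← Finset.sum_mul, ← hS]
    rw [hαdef, show S * (((n:ℝ) - m) * S⁻¹) = ((n:ℝ) - m) * (S * S⁻¹) by ring,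
      mul_inv_cancel₀ hSne, mul_one]
    have : ((n + 1 - m : ℕ) : ℝ) = (n:ℝ) + 1 - m := by
      have : m ≤ n + 1 := by omega
      push_cast [this]
      ring
    rw [nsmul_eq_mul, this]
    ring
  refine ⟨hα_pos, hsum, ?_, ?_⟩
  · -- uniqueness
    have hmono : ∀ β1 β2 : ℝ, 0 < β1 → β1 < β2 →
        (∑ i ∈ Finset.Icc 1 n, max (0:ℝ) (1 - c i / v i * β1) = 1) →
        ∑ i ∈ Finset.Icc 1 n, max (0:ℝ) (1 - c i / v i * β2) <
        ∑ i ∈ Finset.Icc 1 n, max (0:ℝ) (1 - c i / v i * β1) := by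
      intro β1 β2 hβ1 h12 hf1
      have hwit : ∃ i ∈ Finset.Icc 1 n, (0:ℝ) < max 0 (1 - c i / v i * β1) := by
        apply Finset.exists_lt_of_sum_lt (f := fun _ => (0:ℝ))
        rw [hf1, Finset.sum_const, smul_zero]
        exact one_pos
      obtain ⟨i0, hi0, hpos⟩ := hwit
      have hpos' : 0 < 1 - c i0 / v i0 * β1 := by
        rcases lt_max_iff.mp hpos with h | h
        · exact absurd h (lt_irrefl 0)
        · exact h
      apply Finset.sum_lt_sum
      · intro i hi
        apply max_le_max le_rfl
        have := (hr_pos i hi).le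
        nlinarith
      · refine ⟨i0, hi0, ?_⟩
        have hr0 := hr_pos i0 hi0
        have hlt : 1 - c i0 / v i0 * β2 < 1 - c i0 / v i0 * β1 := by nlinarith
        calc max (0:ℝ) (1 - c i0 / v i0 * β2) < 1 - c i0 / v i0 * β1 :=
              max_lt hpos' hlt
          _ ≤ max (0:ℝ) (1 - c i0 / v i0 * β1) := le_max_right _ _
    intro β hβ hfβ
    rcases lt_trichotomy β α with h | h | h
    · have := hmono β α hβ h hfβ
      rw [hsum, hfβ] at this
      exact absurd this (lt_irrefl 1)
    · exact h
    · have := hmono α β hα_pos h hsum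
      rw [hsum, hfβ] at this
      exact absurd this (lt_irrefl 1)
  · intro i hi
    have hzero : max (0:ℝ) (1 - c i / v i * α) = 0 :=
      max_eq_left (by linarith [hlo i hi])
    refine ⟨by rw [hzero, mul_zero], ?_⟩
    rw [Finset.mem_Icc] at hi
    have hvi := hv i (Finset.mem_Icc.mpr ⟨hi.1, by omega⟩)
    have h1 := hlo i (Finset.mem_Icc.mpr hi)
    have hkey : v i * (c i / v i * α) = c i * α := by
      field_simp
    apply max_eq_left
    nlinarith
end

section
/- In a 3-player Tullock contest with v_1/c_1 ≤ v_2/c_2 ≤ v_3/c_3, if c_2/v_2 + c_3/v_3 ≤ c_1/v_1, then the equilibrium bids are x_1* = 0, x_2* = (c_3/v_3)/((c_2/v_2 + c_3/v_3)^2) and x_3* = (c_2/v_2)/((c_2/v_2 + c_3/v_3)^2), and the equilibrium payoffs are U_1* = 0, U_2* = v_2·(c_3/v_3)/(c_2/v_2 + c_3/v_3) and U_3* = v_3·(c_2/v_2)/(c_2/v_2 + c_3/v_3). -/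
/-!
Write `rᵢ = cᵢ/vᵢ`. Since `r₂ + r₃ ≤ r₁`, player 1 cannot be active at the equilibrium
level `α`: otherwise all three players would be active and `∑ (1 - rᵢα) > 1`, as
`(r₁ + r₂ + r₃)α ≤ 2r₁α < 2`. With player 1
out, both remaining players are active, so `(r₂ + r₃)α = 1`, and the bids and payoffs are read
off from `α = 1/(r₂ + r₃)`.
-/

lemma max_zero_sub_mul_eq_mul_max_zero {v : ℝ} (hv : 0 < v) (k α : ℝ) :
    max 0 (v - k * α) = v * max 0 (1 - k / v * α) := by
  rw [mul_max_of_nonneg _ _ hv.le, mul_zero, mul_sub, mul_one, ← mul_assoc,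
    mul_div_cancel₀ _ hv.ne']

lemma max_zero_one_sub_mul_inv_add {b c : ℝ} (hb : 0 < b) (hc : 0 < c) :
    max 0 (1 - b * (b + c)⁻¹) = c / (b + c) := by
  have hbc : 0 < b + c := by positivity
  have hshare : 1 - b * (b + c)⁻¹ = c / (b + c) := by field_simp; ring
  rw [hshare, max_eq_right (by positivity)]

section ParticipationEquation

variable {a b c α : ℝ}

lemma mul_eq_one_of_max_zero_add_max_zero_eq_one (hb : 0 < b) (hc : 0 < c) (hα : 0 < α)
    (h : max 0 (1 - b * α) + max 0 (1 - c * α) = 1) : (b + c) * α = 1 := by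
  have hb₁ : max 0 (1 - b * α) < 1 := max_lt one_pos (by linarith [mul_pos hb hα])
  have hc₁ : max 0 (1 - c * α) < 1 := max_lt one_pos (by linarith [mul_pos hc hα])
  have hb₀ : 0 ≤ 1 - b * α := le_of_not_ge fun hb₀ => by linarith [max_eq_left hb₀]
  have hc₀ : 0 ≤ 1 - c * α := le_of_not_ge fun hc₀ => by linarith [max_eq_left hc₀]
  rw [max_eq_right hb₀, max_eq_right hc₀] at h
  linarith

lemma one_le_mul_of_max_zero_add_max_zero_add_max_zero_eq_one (hb : 0 < b) (hc : 0 < c)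
    (hbca : b + c ≤ a)
    (h : max 0 (1 - a * α) + max 0 (1 - b * α) + max 0 (1 - c * α) = 1) : 1 ≤ a * α := by
  by_contra! haα
  have ha₁ := le_max_right 0 (1 - a * α)
  have hb₁ := le_max_right 0 (1 - b * α)
  have hc₁ := le_max_right 0 (1 - c * α)
  rcases le_or_gt α 0 with hα | hα
  · nlinarith [le_max_left 0 (1 - a * α)]
  · nlinarith

lemma eq_inv_add_of_max_zero_add_max_zero_add_max_zero_eq_one (hb : 0 < b) (hc : 0 < c)
    (hbca : b + c ≤ a)
    (h : max 0 (1 - a * α) + max 0 (1 - b * α) + max 0 (1 - c * α) = 1) :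
    α = (b + c)⁻¹ ∧ max 0 (1 - a * α) = 0 := by
  have haα := one_le_mul_of_max_zero_add_max_zero_add_max_zero_eq_one hb hc hbca h
  have ha₀ : max 0 (1 - a * α) = 0 := max_eq_left (by linarith)
  have hα : 0 < α := pos_of_mul_pos_right (one_pos.trans_le haα) (by linarith)
  rw [ha₀, zero_add] at h
  exact ⟨eq_inv_of_mul_eq_one_right (mul_eq_one_of_max_zero_add_max_zero_eq_one hb hc hα h),
    ha₀⟩

end ParticipationEquation

theorem tullock3_dropout_case_general (v₁ v₂ v₃ c₁ c₂ c₃ : ℝ)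
    (hv₁ : 0 < v₁) (hv₂ : 0 < v₂) (hv₃ : 0 < v₃)
    (hc₂ : 0 < c₂) (hc₃ : 0 < c₃)
    (hcase : c₂ / v₂ + c₃ / v₃ ≤ c₁ / v₁)
    (α : ℝ)
    (hαeq : max (0 : ℝ) (1 - c₁ / v₁ * α) + max (0 : ℝ) (1 - c₂ / v₂ * α) +
      max (0 : ℝ) (1 - c₃ / v₃ * α) = 1) :
    α * max (0 : ℝ) (1 - c₁ / v₁ * α) = 0 ∧
    α * max (0 : ℝ) (1 - c₂ / v₂ * α) = (c₃ / v₃) / (c₂ / v₂ + c₃ / v₃) ^ 2 ∧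
    α * max (0 : ℝ) (1 - c₃ / v₃ * α) = (c₂ / v₂) / (c₂ / v₂ + c₃ / v₃) ^ 2 ∧
    max (0 : ℝ) (v₁ - c₁ * α) = 0 ∧
    max (0 : ℝ) (v₂ - c₂ * α) = v₂ * (c₃ / v₃) / (c₂ / v₂ + c₃ / v₃) ∧
    max (0 : ℝ) (v₃ - c₃ * α) = v₃ * (c₂ / v₂) / (c₂ / v₂ + c₃ / v₃) := by
  have hr₂ : 0 < c₂ / v₂ := div_pos hc₂ hv₂
  have hr₃ : 0 < c₃ / v₃ := div_pos hc₃ hv₃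
  obtain ⟨rfl, hx₁⟩ :=
    eq_inv_add_of_max_zero_add_max_zero_add_max_zero_eq_one hr₂ hr₃ hcase hαeq
  have hx₂ := max_zero_one_sub_mul_inv_add hr₂ hr₃
  have hx₃ := max_zero_one_sub_mul_inv_add hr₃ hr₂
  rw [add_comm (c₃ / v₃)] at hx₃
  rw [max_zero_sub_mul_eq_mul_max_zero hv₁, max_zero_sub_mul_eq_mul_max_zero hv₂,
    max_zero_sub_mul_eq_mul_max_zero hv₃, hx₁, hx₂, hx₃]
  refine ⟨mul_zero _, ?_, ?_, mul_zero _, (mul_div_assoc _ _ _).symm,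
    (mul_div_assoc _ _ _).symm⟩ <;> field_simp

/-- In a 3-player Tullock contest with `v₁/c₁ ≤ v₂/c₂ ≤ v₃/c₃`, if
`c₂/v₂ + c₃/v₃ ≤ c₁/v₁`, then (with `α > 0` the unique solution of
`∑ i [1 - (cᵢ/vᵢ)α]^+ = 1` and equilibrium bids `xᵢ* = α[1 - (cᵢ/vᵢ)α]^+`,
payoffs `Uᵢ* = [vᵢ - cᵢα]^+`): `x₁* = 0`,
`x₂* = (c₃/v₃)/((c₂/v₂ + c₃/v₃)²)`, `x₃* = (c₂/v₂)/((c₂/v₂ + c₃/v₃)²)`,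
`U₁* = 0`, `U₂* = v₂(c₃/v₃)/(c₂/v₂ + c₃/v₃)`,
`U₃* = v₃(c₂/v₂)/(c₂/v₂ + c₃/v₃)`. -/
theorem tullock3_dropout_case (v₁ v₂ v₃ c₁ c₂ c₃ : ℝ)
    (hv₁ : 0 < v₁) (hv₂ : 0 < v₂) (hv₃ : 0 < v₃)
    (hc₁ : 0 < c₁) (hc₂ : 0 < c₂) (hc₃ : 0 < c₃)
    (hsort₁ : v₁ / c₁ ≤ v₂ / c₂) (hsort₂ : v₂ / c₂ ≤ v₃ / c₃)
    (hcase : c₂ / v₂ + c₃ / v₃ ≤ c₁ / v₁)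
    (α : ℝ) (hα : 0 < α)
    (hαeq : max (0 : ℝ) (1 - c₁ / v₁ * α) + max (0 : ℝ) (1 - c₂ / v₂ * α) +
      max (0 : ℝ) (1 - c₃ / v₃ * α) = 1) :
    α * max (0 : ℝ) (1 - c₁ / v₁ * α) = 0 ∧
    α * max (0 : ℝ) (1 - c₂ / v₂ * α) = (c₃ / v₃) / (c₂ / v₂ + c₃ / v₃) ^ 2 ∧
    α * max (0 : ℝ) (1 - c₃ / v₃ * α) = (c₂ / v₂) / (c₂ / v₂ + c₃ / v₃) ^ 2 ∧
    max (0 : ℝ) (v₁ - c₁ * α) = 0 ∧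
    max (0 : ℝ) (v₂ - c₂ * α) = v₂ * (c₃ / v₃) / (c₂ / v₂ + c₃ / v₃) ∧
    max (0 : ℝ) (v₃ - c₃ * α) = v₃ * (c₂ / v₂) / (c₂ / v₂ + c₃ / v₃) :=
  tullock3_dropout_case_general v₁ v₂ v₃ c₁ c₂ c₃ hv₁ hv₂ hv₃ hc₂ hc₃ hcase α hαeq
end

section
/- Let v_K, c_1, c_2, c_3, v_1 > 0. There exist v_2, v_3 > 0 satisfying both c_2·v_3^2 + c_3·v_2^2 = v_K·(c_2·v_3 + c_3·v_2) and c_2/v_2 + c_3/v_3 ≤ c_1/v_1 if and only if 2·√(c_2·c_3) ≤ v_K·(c_1/v_1). -/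
/-!
On the feasibility curve `c₂ v₃² + c₃ v₂² = v_K (c₂ v₃ + c₃ v₂)` the abstention quantity
`c₂/v₂ + c₃/v₃ = (c₂ v₃ + c₃ v₂)/(v₂ v₃)` equals `(c₂ v₃² + c₃ v₂²)/(v_K v₂ v₃)`, which by AM-GM is
at least `2√(c₂c₃)/v_K`. The bound is attained where AM-GM is tight, `√c₂ v₃ = √c₃ v₂`, so the
minimum of the abstention quantity over the curve is exactly `2√(c₂c₃)/v_K`.
-/

open Real

theorem two_sqrt_mul_mul_mul_le {a b : ℝ} (ha : 0 ≤ a) (hb : 0 ≤ b) (x y : ℝ) :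
    2 * √(a * b) * (x * y) ≤ a * y ^ 2 + b * x ^ 2 := by
  have h := two_mul_le_add_sq (√a * y) (√b * x)
  rw [sqrt_mul ha]
  nlinarith [sq_sqrt ha, sq_sqrt hb]

theorem two_sqrt_mul_le_mul_div_add_div {k a b x y : ℝ} (ha : 0 ≤ a) (hb : 0 ≤ b)
    (hx : 0 < x) (hy : 0 < y) (hfeas : a * y ^ 2 + b * x ^ 2 = k * (a * y + b * x)) :
    2 * √(a * b) ≤ k * (a / x + b / y) := by
  have hxy : 0 < x * y := mul_pos hx hy
  have hsum : k * (a / x + b / y) = (a * y ^ 2 + b * x ^ 2) / (x * y) := by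
    rw [hfeas]
    field_simp
  rw [hsum, le_div_iff₀ hxy]
  exact two_sqrt_mul_mul_mul_le ha hb x y

theorem exists_feasible_div_add_div_eq {k a b : ℝ} (hk : 0 < k) (ha : 0 < a) (hb : 0 < b) :
    ∃ x y : ℝ, 0 < x ∧ 0 < y ∧ a * y ^ 2 + b * x ^ 2 = k * (a * y + b * x) ∧
      a / x + b / y = 2 * √(a * b) / k := by
  set s := √(a * b)
  have hs : 0 < s := sqrt_pos.mpr (mul_pos ha hb)
  have hs2 : s ^ 2 = a * b := sq_sqrt (mul_pos ha hb).le
  -- `y / x = (s + b) / (s + a) = √b / √a`: the equality case of AM-GM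
  refine ⟨k * (s + a) / (2 * s), k * (s + b) / (2 * s), by positivity, by positivity, ?_, ?_⟩
  · field_simp
    linear_combination (-(a + b)) * hs2
  · have hsa : s + a ≠ 0 := by positivity
    have hsb : s + b ≠ 0 := by positivity
    field_simp
    linear_combination (-1) * hs2

theorem tullock_coordinator_exclusion_iff_general (vK c₁ c₂ c₃ v₁ : ℝ)
    (hvK : 0 < vK) (hc₂ : 0 < c₂) (hc₃ : 0 < c₃) :
    (∃ v₂ v₃ : ℝ, 0 < v₂ ∧ 0 < v₃ ∧
        c₂ * v₃ ^ 2 + c₃ * v₂ ^ 2 = vK * (c₂ * v₃ + c₃ * v₂) ∧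
        c₂ / v₂ + c₃ / v₃ ≤ c₁ / v₁) ↔
      2 * Real.sqrt (c₂ * c₃) ≤ vK * (c₁ / v₁) := by
  constructor
  · rintro ⟨v₂, v₃, hv₂, hv₃, hfeas, habst⟩
    exact (two_sqrt_mul_le_mul_div_add_div hc₂.le hc₃.le hv₂ hv₃ hfeas).trans
      (mul_le_mul_of_nonneg_left habst hvK.le)
  · intro h
    obtain ⟨v₂, v₃, hv₂, hv₃, hfeas, hsum⟩ := exists_feasible_div_add_div_eq hvK hc₂ hc₃
    refine ⟨v₂, v₃, hv₂, hv₃, hfeas, ?_⟩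
    rwa [hsum, div_le_iff₀ hvK, mul_comm (c₁ / v₁)]

/-- For `v_K, c₁, c₂, c₃, v₁ > 0`, there exist reported valuations
`v₂, v₃ > 0` satisfying both the feasibility condition
`c₂·v₃² + c₃·v₂² = v_K·(c₂·v₃ + c₃·v₂)` and the abstention condition
`c₂/v₂ + c₃/v₃ ≤ c₁/v₁` if and only if `2·√(c₂·c₃) ≤ v_K·(c₁/v₁)`. -/
theorem tullock_coordinator_exclusion_iff (vK c₁ c₂ c₃ v₁ : ℝ)
    (hvK : 0 < vK) (hc₁ : 0 < c₁) (hc₂ : 0 < c₂) (hc₃ : 0 < c₃)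
    (hv₁ : 0 < v₁) :
    (∃ v₂ v₃ : ℝ, 0 < v₂ ∧ 0 < v₃ ∧
        c₂ * v₃ ^ 2 + c₃ * v₂ ^ 2 = vK * (c₂ * v₃ + c₃ * v₂) ∧
        c₂ / v₂ + c₃ / v₃ ≤ c₁ / v₁) ↔
      2 * Real.sqrt (c₂ * c₃) ≤ vK * (c₁ / v₁) :=
  tullock_coordinator_exclusion_iff_general vK c₁ c₂ c₃ v₁ hvK hc₂ hc₃
end

section
/- Consider a 3-player Tullock contest where player 1 has valuation v_1 > 0 and cost c_1 > 0, and players 2, 3 have costs c_2, c_3 > 0 and reported valuations v_2, v_3 > 0 chosen by a coordinator with valuation v_K > 0. Suppose v_K·(c_1/v_1) ≥ 2·√(c_2·c_3). Then any v_2, v_3 > 0 satisfying c_2·v_3^2 + c_3·v_2^2 = v_K·(c_2·v_3 + c_3·v_2) and c_1/v_1 ≥ c_2/v_2 + c_3/v_3 yields a Nash equilibrium x* (with x_i* = α·[1 − (c_i/v_i)·α]^+ and α the unique positive solution of ∑_{i=1}^3 [1 − (c_i/v_i)·α]^+ = 1) in which x_1* = 0 and the coordinator's payoff v_K·(x_2*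 + x_3*)/(x_1* + x_2* + x_3*) equals v_K, the maximum possible value. -/
/-- In the 3-player Tullock contest with a coordinator (opponent: valuation
`v₁ > 0`, cost `c₁ > 0`; subordinates: costs `c₂, c₃ > 0`, reported valuations
`v₂, v₃ > 0`; coordinator valuation `v_K > 0`), if `v_K·(c₁/v₁) ≥ 2·√(c₂·c₃)`,
then any `v₂, v₃ > 0` satisfying `c₂·v₃² + c₃·v₂² = v_K·(c₂·v₃ + c₃·v₂)` and
`c₁/v₁ ≥ c₂/v₂ + c₃/v₃` yields an equilibrium (bids
`xᵢ* = α·[1 - (cᵢ/vᵢ)·α]^+` with `α` the unique positive solution of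
`∑ᵢ [1 - (cᵢ/vᵢ)·α]^+ = 1`) in which `x₁* = 0` and the coordinator's payoff
`v_K·(x₂* + x₃*)/(x₁* + x₂* + x₃*)` equals `v_K`, the maximum possible value. -/
theorem tullock_coordinator_full_capture (vK v₁ c₁ c₂ c₃ v₂ v₃ : ℝ)
    (hvK : 0 < vK) (hv₁ : 0 < v₁) (hc₁ : 0 < c₁) (hc₂ : 0 < c₂)
    (hc₃ : 0 < c₃) (hv₂ : 0 < v₂) (hv₃ : 0 < v₃)
    (hcase : 2 * Real.sqrt (c₂ * c₃) ≤ vK * (c₁ / v₁))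
    (hfeas : c₂ * v₃ ^ 2 + c₃ * v₂ ^ 2 = vK * (c₂ * v₃ + c₃ * v₂))
    (habstain : c₂ / v₂ + c₃ / v₃ ≤ c₁ / v₁)
    (α : ℝ) (hα : 0 < α)
    (hαeq : max (0 : ℝ) (1 - c₁ / v₁ * α) + max (0 : ℝ) (1 - c₂ / v₂ * α) +
      max (0 : ℝ) (1 - c₃ / v₃ * α) = 1)
    (x₁ x₂ x₃ : ℝ)
    (hx₁ : x₁ = α * max (0 : ℝ) (1 - c₁ / v₁ * α))
    (hx₂ : x₂ = α * max (0 : ℝ) (1 - c₂ / v₂ * α))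
    (hx₃ : x₃ = α * max (0 : ℝ) (1 - c₃ / v₃ * α)) :
    x₁ = 0 ∧
    vK * (x₂ + x₃) / (x₁ + x₂ + x₃) = vK ∧
    (∀ y₁ y₂ y₃ : ℝ, 0 ≤ y₁ → 0 ≤ y₂ → 0 ≤ y₃ →
      vK * (y₂ + y₃) / (y₁ + y₂ + y₃) ≤ vK) := by

  set a := c₁ / v₁ with ha_def
  set b := c₂ / v₂ with hb_def
  set c := c₃ / v₃ with hc_def
  have ha : 0 < a := div_pos hc₁ hv₁
  have hb : 0 < b := div_pos hc₂ hv₂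
  have hc : 0 < c := div_pos hc₃ hv₃
  -- Step 1: 1 - a*α ≤ 0
  have h1 : 1 - a * α ≤ 0 := by
    by_contra h
    push_neg at h
    have hba : b * α < a * α := by nlinarith
    have hca : c * α < a * α := by nlinarith
    have hb' : 0 < 1 - b * α := by linarith
    have hc' : 0 < 1 - c * α := by linarith
    rw [max_eq_right h.le, max_eq_right hb'.le, max_eq_right hc'.le] at hαeq
    nlinarith
  have hm1 : max (0 : ℝ) (1 - a * α) = 0 := max_eq_left h1
  have hx₁0 : x₁ = 0 := by rw [hx₁, hm1, mul_zero]
  refine ⟨hx₁0, ?_, ?_⟩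
  · have hsum : max (0 : ℝ) (1 - b * α) + max (0 : ℝ) (1 - c * α) = 1 := by
      rw [hm1] at hαeq; linarith
    have hx23 : x₂ + x₃ = α := by
      rw [hx₂, hx₃, ← mul_add, hsum, mul_one]
    rw [hx₁0, zero_add, hx23, mul_div_assoc, div_self hα.ne', mul_one]
  · intro y₁ y₂ y₃ hy₁ hy₂ hy₃
    rcases eq_or_lt_of_le (by linarith : (0:ℝ) ≤ y₁ + y₂ + y₃) with h | h
    · rw [← h, div_zero]; exact hvK.le
    · rw [div_le_iff₀ h]
      nlinarith
end

section
/- For all positive reals v_K, w_1, c_2, c_3: v_K·(2·v_K·w_1 + (√c_2 − √c_3)^2)/(v_K·w_1 + c_2 + c_3) ≥ v_K·w_1/(w_1 + c_2/v_K). Equivalently, the difference between the two sides, after clearing positive denominators, equals the square [v_K·w_1 + √c_2·(√c_2 − √c_3)]^2 ≥ 0 up to a positive factor. -/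
/-- For all positive reals `v_K, w₁, c₂, c₃`, the coordinator's interior-case
payoff dominates its payoff when subordinate player 3 is excluded:
`v_K·(2·v_K·w₁ + (√c₂ - √c₃)²)/(v_K·w₁ + c₂ + c₃) ≥ v_K·w₁/(w₁ + c₂/v_K)`. -/
theorem tullock_interior_dominates_exclusion (vK w₁ c₂ c₃ : ℝ)
    (hvK : 0 < vK) (hw₁ : 0 < w₁) (hc₂ : 0 < c₂) (hc₃ : 0 < c₃) :
    vK * w₁ / (w₁ + c₂ / vK) ≤
      vK * (2 * vK * w₁ + (Real.sqrt c₂ - Real.sqrt c₃) ^ 2) /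
        (vK * w₁ + c₂ + c₃) := by
  set a := Real.sqrt c₂ with ha
  set b := Real.sqrt c₃ with hb
  have ha2 : a ^ 2 = c₂ := Real.sq_sqrt hc₂.le
  have hb2 : b ^ 2 = c₃ := Real.sq_sqrt hc₃.le
  have hap : 0 < a := Real.sqrt_pos.mpr hc₂
  have hbp : 0 < b := Real.sqrt_pos.mpr hc₃
  rw [div_le_div_iff₀ (by positivity) (by positivity)]
  have h : w₁ + c₂ / vK = (vK * w₁ + c₂) / vK := by field_simp
  have h2 : vK * (2 * vK * w₁ + (a - b) ^ 2) * ((vK * w₁ + c₂) / vK)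
      = (2 * vK * w₁ + (a - b) ^ 2) * (vK * w₁ + c₂) := by
    field_simp
  rw [h, h2, ← ha2, ← hb2]
  nlinarith [sq_nonneg (vK * w₁ + a * (a - b)), sq_nonneg a, sq_nonneg b,
    mul_pos hvK hw₁, mul_pos hap hbp]
end

section
/- Let v_K, w_1, c_2, c_3 > 0 and define w_i = w_1·(√c_2 + √c_3)·√c_i/(2·v_K·w_1 + (√c_2 − √c_3)^2) for i = 2, 3. Then (c_2/w_2 + c_3/w_3)·(w_1 + w_2 + w_3) = 2·(v_K·w_1 + c_2 + c_3), and moreover 2·v_K·w_1/(w_1 + w_2 + w_3) = v_K·(2·v_K·w_1 + (√c_2 − √c_3)^2)/(v_K·w_1 + c_2 + c_3). -/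
/-- In the interior-equilibrium case of the 3-player Tullock contest with a
coordinator, the optimal relative per-unit costs
`wᵢ = w₁·(√c₂ + √c₃)·√cᵢ/(2·v_K·w₁ + (√c₂ - √c₃)²)` for `i = 2, 3` satisfy the
feasibility constraint `(c₂/w₂ + c₃/w₃)·(w₁ + w₂ + w₃) = 2·(v_K·w₁ + c₂ + c₃)`,
and the coordinator's payoff `2·v_K·w₁/(w₁ + w₂ + w₃)` equals
`v_K·(2·v_K·w₁ + (√c₂ - √c₃)²)/(v_K·w₁ + c₂ + c₃)`. -/
theorem tullock_optimal_w_verification (vK w₁ c₂ c₃ w₂ w₃ : ℝ)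
    (hvK : 0 < vK) (hw₁ : 0 < w₁) (hc₂ : 0 < c₂) (hc₃ : 0 < c₃)
    (hw₂ : w₂ = w₁ * (Real.sqrt c₂ + Real.sqrt c₃) * Real.sqrt c₂ /
      (2 * vK * w₁ + (Real.sqrt c₂ - Real.sqrt c₃) ^ 2))
    (hw₃ : w₃ = w₁ * (Real.sqrt c₂ + Real.sqrt c₃) * Real.sqrt c₃ /
      (2 * vK * w₁ + (Real.sqrt c₂ - Real.sqrt c₃) ^ 2)) :
    (c₂ / w₂ + c₃ / w₃) * (w₁ + w₂ + w₃) = 2 * (vK * w₁ + c₂ + c₃) ∧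
    2 * vK * w₁ / (w₁ + w₂ + w₃) =
      vK * (2 * vK * w₁ + (Real.sqrt c₂ - Real.sqrt c₃) ^ 2) /
        (vK * w₁ + c₂ + c₃) := by
  set s₂ := Real.sqrt c₂ with hs₂def
  set s₃ := Real.sqrt c₃ with hs₃def
  have hs₂ : 0 < s₂ := Real.sqrt_pos.mpr hc₂
  have hs₃ : 0 < s₃ := Real.sqrt_pos.mpr hc₃
  have hc₂' : s₂ ^ 2 = c₂ := Real.sq_sqrt hc₂.le
  have hc₃' : s₃ ^ 2 = c₃ := Real.sq_sqrt hc₃.le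
  have hD : 0 < 2 * vK * w₁ + (s₂ - s₃) ^ 2 := by positivity
  have hw₂pos : 0 < w₂ := by rw [hw₂]; positivity
  have hw₃pos : 0 < w₃ := by rw [hw₃]; positivity
  have hsum : 0 < vK * w₁ + c₂ + c₃ := by positivity
  have hsumw : 0 < w₁ + w₂ + w₃ := by positivity
  constructor
  · rw [hw₂, hw₃, ← hc₂', ← hc₃']
    field_simp
    ring
  · rw [div_eq_div_iff hsumw.ne' hsum.ne', hw₂, hw₃, ← hc₂', ← hc₃']
    field_simp
    ring
end
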